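/- Let n ∈ ℕ, N = 2^n, and let G be the n-fold Kronecker power over 𝔽₂ of the kernel [[1,0],[1,1]]. For every T ⊆ {0,…,N−1} and every bit position ℓ ∈ {0,…,n−1}, let T⁰_ℓ = {k ∈ T : the ℓ-th binary digit of k is 0}. Then the Hamming weight of the 𝔽₂-sum of the rows indexed by T is bounded below by that of the sum over T⁰_ℓ: i₁(Σ_{t∈T} g_t) ≥ i₁(Σ_{t∈T⁰_ℓ} g_t); in particular i₁(g_T) ≥ max_{ℓ∈[0,n)} i₁(g_{T⁰_ℓ}). -/

import Mathlib

open Finset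

/-- The polar kernel `G₂ = [[1,0],[1,1]]` over `𝔽₂`. -/
def polarKernel : Matrix (Fin 2) (Fin 2) (ZMod 2) := !![1, 0; 1, 1]

/-- The `n`-fold Kronecker power of the polar kernel, an `N × N` matrix over `𝔽₂`
with `N = 2 ^ n`, rows and columns indexed by `0, …, N-1`. -/
def polarG : (n : ℕ) → Matrix (Fin (2 ^ n)) (Fin (2 ^ n)) (ZMod 2)
  | 0 => 1
  | n + 1 =>
    Matrix.reindex (finCongr (by ring)) (finCongr (by ring))
      (Matrix.reindex finProdFinEquiv finProdFinEquiv
        (Matrix.kroneckerMap (· * ·) polarKernel (polarG n)))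

/-- Row `g_t` of the polar matrix, as a vector in `𝔽₂^N`. -/
def row (n : ℕ) (t : Fin (2 ^ n)) : Fin (2 ^ n) → ZMod 2 := fun c => polarG n t c

/-- Hamming weight `i₁(v)`: the number of nonzero coordinates of `v`. -/
def hammingWeight {N : ℕ} (v : Fin N → ZMod 2) : ℕ :=
  (Finset.univ.filter fun c => v c ≠ 0).card

/-- `popcount j`: the number of ones in the binary representation of `j`. -/
def popcount (j : ℕ) : ℕ := (Nat.bits j).count true

/-!
Entry `(t, c)` of `G` is `1` exactly when the binary digits of `c` form a subset of those of `t`.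
Hence the rows `g_t` with `t` in `T⁰_ℓ` vanish on the columns whose `ℓ`-th digit is `1`, while
on a column `c` whose `ℓ`-th digit is `0` the rows with `ℓ`-th digit `1` take equal values at
`c` and at `c + 2^ℓ`. Over `𝔽₂` this gives `(g_{T⁰_ℓ})_c = (g_T)_c + (g_T)_{c + 2^ℓ}`, so sending
`c` to whichever of `c`, `c + 2^ℓ` lies in the support of `g_T` injects the support of
`g_{T⁰_ℓ}` into that of `g_T`.
-/

theorem card_filter_ne_zero_le_of_eq_add_comp {α M : Type*} [Fintype α] [AddZeroClass M]
    [DecidableEq M] {v w : α → M} {S : Set α} {σ : α → α}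
    (hw : ∀ c, w c ≠ 0 → c ∈ S) (hσS : ∀ c ∈ S, σ c ∉ S) (hσ : S.InjOn σ)
    (hvw : ∀ c ∈ S, w c = v c + v (σ c)) :
    #{c | w c ≠ 0} ≤ #{c | v c ≠ 0} := by
  refine card_le_card_of_injOn (fun c => if v c = 0 then σ c else c) ?_ ?_
  · intro c hc
    simp only [coe_filter, mem_univ, true_and, Set.mem_ofPred_eq] at hc ⊢
    split_ifs with hvc
    · simpa [hvw c (hw c hc), hvc] using hc
    · exact hvc
  · intro c hc d hd hcd
    simp only [coe_filter, mem_univ, true_and, Set.mem_ofPred_eq] at hc hd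
    have hcS := hw c hc
    have hdS := hw d hd
    dsimp only at hcd
    split_ifs at hcd
    · exact hσ hcS hdS hcd
    · exact absurd (hcd ▸ hdS) (hσS c hcS)
    · exact absurd (hcd ▸ hcS) (hσS d hdS)
    · exact hcd

namespace Nat

theorem land_eq_self_iff_testBit {c t : ℕ} :
    c &&& t = c ↔ ∀ i, c.testBit i = true → t.testBit i = true := by
  refine ⟨fun h i hi => ?_, fun h => Nat.eq_of_testBit_eq fun i => ?_⟩
  · simpa [hi] using congrArg (Nat.testBit · i) h
  · cases hc : c.testBit i <;> simp [hc, h i]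

theorem land_eq_self_iff_div_mod (c t n : ℕ) :
    c &&& t = c ↔ c / 2 ^ n &&& t / 2 ^ n = c / 2 ^ n ∧ c % 2 ^ n &&& t % 2 ^ n = c % 2 ^ n := by
  rw [Nat.ext_div_mod_iff (2 ^ n), Nat.and_div_two_pow, Nat.and_mod_two_pow]

theorem xor_two_pow_land_eq_self_iff {c t ℓ : ℕ} (hc : c.testBit ℓ = false) :
    (c ^^^ 2 ^ ℓ) &&& t = c ^^^ 2 ^ ℓ ↔ t.testBit ℓ = true ∧ c &&& t = c := by
  simp only [land_eq_self_iff_testBit, testBit_xor, testBit_two_pow]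
  constructor
  · intro h
    refine ⟨by simpa [hc] using h ℓ, fun i hi => h i ?_⟩
    have : i ≠ ℓ := by rintro rfl; simp [hc] at hi
    simp [hi, Ne.symm this]
  · rintro ⟨hℓ, h⟩ i hi
    by_cases hiℓ : i = ℓ
    · exact hiℓ ▸ hℓ
    · exact h i (by simpa [Ne.symm hiℓ] using hi)

end Nat

theorem polarKernel_apply (a b : Fin 2) :
    polarKernel a b = if (b : ℕ) &&& a = b then 1 else 0 := by
  fin_cases a <;> fin_cases b <;> rfl

theorem polarG_apply (n : ℕ) (t c : Fin (2 ^ n)) :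
    polarG n t c = if (c : ℕ) &&& t = c then 1 else 0 := by
  induction n with
  | zero =>
    obtain rfl : t = c := Fin.ext (by omega)
    simp [polarG]
  | succ n ih =>
    simp only [polarG, Matrix.reindex_apply, Matrix.submatrix_apply, Matrix.kroneckerMap_apply,
      finCongr_symm, finCongr_apply, finProdFinEquiv_symm_apply, ih, polarKernel_apply,
      ite_zero_mul_ite_zero, mul_one, Nat.land_eq_self_iff_div_mod (c : ℕ) t n]
    simp only [Fin.divNat, Fin.modNat, Fin.val_cast]
    congr

theorem row_apply (n : ℕ) (t c : Fin (2 ^ n)) :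
    row n t c = if (c : ℕ) &&& t = c then 1 else 0 :=
  polarG_apply n t c

section RowSums

variable {n ℓ : ℕ} (T : Finset (Fin (2 ^ n)))

theorem sum_row_filter_testBit_apply_eq_zero {c : Fin (2 ^ n)}
    (hc : (c : ℕ).testBit ℓ = true) :
    (∑ t ∈ T.filter (fun k : Fin (2 ^ n) => (k : ℕ).testBit ℓ = false), row n t) c = 0 := by
  rw [Finset.sum_apply]
  refine sum_eq_zero fun t ht => ?_
  rw [row_apply, if_neg]
  intro h
  simpa [(mem_filter.mp ht).2] using Nat.land_eq_self_iff_testBit.mp h ℓ hc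

theorem sum_row_filter_testBit_apply_eq_add {b c : Fin (2 ^ n)} (hb : (b : ℕ) = 2 ^ ℓ)
    (hc : (c : ℕ).testBit ℓ = false) :
    (∑ t ∈ T.filter (fun k : Fin (2 ^ n) => (k : ℕ).testBit ℓ = false), row n t) c =
      (∑ t ∈ T, row n t) c + (∑ t ∈ T, row n t) (c ^^^ b) := by
  simp only [Finset.sum_apply, sum_filter, ← sum_add_distrib]
  refine sum_congr rfl fun t _ => ?_
  simp only [row_apply, Fin.xor_val_of_two_pow, hb, Nat.xor_two_pow_land_eq_self_iff hc]
  cases (t : ℕ).testBit ℓ <;> simp [CharTwo.add_self_eq_zero]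

end RowSums

/-- the Hamming weight of a sum of rows is bounded below by the weight of
the sub-sum over the rows whose `ℓ`-th binary digit is `0`, for every bit position `ℓ < n`. -/
theorem hamming_weight_lower_bound_zero_bit (n : ℕ) (T : Finset (Fin (2 ^ n)))
    (ℓ : ℕ) (hℓ : ℓ < n) :
    hammingWeight (∑ t ∈ T.filter (fun k : Fin (2 ^ n) => (k : ℕ).testBit ℓ = false), row n t) ≤
      hammingWeight (∑ t ∈ T, row n t) := by
  let b : Fin (2 ^ n) := ⟨2 ^ ℓ, Nat.pow_lt_pow_right one_lt_two hℓ⟩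
  have hflip : Function.Involutive (· ^^^ b) := fun c => xor_cancel_right c b
  refine card_filter_ne_zero_le_of_eq_add_comp (S := {c | (c : ℕ).testBit ℓ = false})
    (σ := (· ^^^ b)) (fun c hw => ?_) (fun c hc => ?_) hflip.injective.injOn
    (fun c hc => sum_row_filter_testBit_apply_eq_add T rfl hc)
  · by_contra hc
    exact hw (sum_row_filter_testBit_apply_eq_zero T (by simpa using hc))
  · simpa [b] using hc
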